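/- Let G* be a 3-graph attaining the maximum 3-spectral radius among all cancellative 3-graphs on n vertices, such that L_{G*}(u) = L_{G*}(v) for every pair of non-adjacent vertices u, v. Let x be a nonnegative vector with ‖x‖_3 = 1 and P_{G*}(x) = λ^(3)(G*), let u_1 be a vertex with x_{u_1} = max_i x_i, and let u_2 be a vertex of maximum x-value among the neighbors of u_1. Then (1) d_{G*}(u_1) > n(n-1)/9, (2) d_{G*}(u_2) > n(n-1)/12, and (3) d_{G*}(v) > n(n-1)/16 for every vertex v. -/

import Mathlib

open Finset

/-- A 3-uniform hypergraph on vertex set `Fin n`, given by its edge set: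
every edge is a 3-element subset. -/
def IsThreeGraph {n : ℕ} (E : Finset (Finset (Fin n))) : Prop :=
  ∀ e ∈ E, e.card = 3

/-- `G` is cancellative: there are no three distinct edges `A, B, C` with `B △ C ⊆ A`. -/
def Cancellative {n : ℕ} (E : Finset (Finset (Fin n))) : Prop :=
  ∀ A ∈ E, ∀ B ∈ E, ∀ C ∈ E, A ≠ B → A ≠ C → B ≠ C → ¬ (symmDiff B C ⊆ A)

/-- The `p`-norm of a vector `x ∈ ℝ^n`. -/
noncomputable def pNorm {n : ℕ} (p : ℝ) (x : Fin n → ℝ) : ℝ :=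
  (∑ i, |x i| ^ p) ^ (1 / p)

/-- The polynomial form of a 3-graph. -/
noncomputable def polyForm {n : ℕ} (E : Finset (Finset (Fin n))) (x : Fin n → ℝ) : ℝ :=
  3 * ∑ e ∈ E, ∏ i ∈ e, x i

/-- The `p`-spectral radius of a 3-graph: the maximum of the polynomial form over the
unit sphere of the `p`-norm. -/
noncomputable def specRad {n : ℕ} (p : ℝ) (E : Finset (Finset (Fin n))) : ℝ :=
  sSup {r : ℝ | ∃ x : Fin n → ℝ, pNorm p x = 1 ∧ polyForm E x = r}

/-- The part (among the three parts of sizes ⌊n/3⌋, ⌊(n+1)/3⌋, ⌊(n+2)/3⌋) containing vertex `i`. -/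
def part3 (n : ℕ) (i : Fin n) : Fin 3 :=
  if (i : ℕ) < n / 3 then 0 else if (i : ℕ) < n / 3 + (n + 1) / 3 then 1 else 2

/-- The complete 3-partite 3-graph `T_3(n)` with part sizes ⌊n/3⌋, ⌊(n+1)/3⌋, ⌊(n+2)/3⌋:
edges are the triples having exactly one vertex in each part. -/
def T3 (n : ℕ) : Finset (Finset (Fin n)) :=
  Finset.univ.filter fun e => ∀ k : Fin 3, (e.filter fun i => part3 n i = k).card = 1

/-- `t_3(n)`, the number of edges of `T_3(n)`. -/
def t3 (n : ℕ) : ℕ := (n / 3) * ((n + 1) / 3) * ((n + 2) / 3)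

/-- Two 3-graphs on `Fin n` are isomorphic. -/
def IsoTo {n : ℕ} (E₁ E₂ : Finset (Finset (Fin n))) : Prop :=
  ∃ σ : Fin n ≃ Fin n, ∀ e : Finset (Fin n), e ∈ E₁ ↔ e.map σ.toEmbedding ∈ E₂

/-- Two vertices are adjacent if some edge contains both. -/
def Adjacent {n : ℕ} (E : Finset (Finset (Fin n))) (u v : Fin n) : Prop :=
  u ≠ v ∧ ∃ e ∈ E, u ∈ e ∧ v ∈ e

/-- The link of a vertex `v`: all 2-element sets `S` with `S ∪ {v} ∈ E`. -/
def link {n : ℕ} (E : Finset (Finset (Fin n))) (v : Fin n) : Finset (Finset (Fin n)) :=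
  (E.filter fun e => v ∈ e).image fun e => e.erase v

/-- The degree of a vertex: the size of its link. -/
def degree {n : ℕ} (E : Finset (Finset (Fin n))) (v : Fin n) : ℕ := (link E v).card

/-- The transfer `T_v^u(G)`: delete all edges containing `v` and replace `v` for `u`
in all edges containing `u` but not `v`. -/
def transfer {n : ℕ} (E : Finset (Finset (Fin n))) (u v : Fin n) : Finset (Finset (Fin n)) :=
  (E.filter fun e => v ∉ e) ∪
    ((E.filter fun e => u ∈ e ∧ v ∉ e).image fun e => insert v (e.erase u))

/-- A 3-graph is complete 3-partite: there is a partition of the vertices into three classes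
such that the edges are exactly the triples with one vertex in each class. -/
def IsComplete3Partite {n : ℕ} (E : Finset (Finset (Fin n))) : Prop :=
  ∃ P : Fin n → Fin 3,
    ∀ e : Finset (Fin n), e ∈ E ↔ ∀ k : Fin 3, (e.filter fun i => P i = k).card = 1

/-- `G` has maximum `p`-spectral radius among all cancellative 3-graphs on `n` vertices. -/
def MaxSpectral {n : ℕ} (p : ℝ) (E : Finset (Finset (Fin n))) : Prop :=
  IsThreeGraph E ∧ Cancellative E ∧
    ∀ E' : Finset (Finset (Fin n)), IsThreeGraph E' → Cancellative E' →
      specRad p E' ≤ specRad p E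

/-!
Comparing with the balanced complete 3-partite graph `T₃(n)`, which is cancellative, gives
`λ > n(n-1)/9`. At a positive coordinate the maximizer satisfies the Lagrange condition
`x^{L(v)} = λ x_v²`, and `x^{L(v)} ≤ d(v) x_{u₁}²`. The transfer of `v` onto `u₁` is again
cancellative, so its spectral radius is at most `λ`; testing it on `x` with `x_v` replaced by
`x_{u₁}` or kept shows that every `x_v > 0` and `x_{u₁}³ ≤ x_{u₁} x_v² + x_v³`, hence
`x_v > (3/4) x_{u₁}`. Finally, non-adjacent vertices having equal links, every edge through `u₂`
contains a neighbour of `u₁` other than `u₂`, so `x^{L(u₂)} ≤ d(u₂) x_{u₁} x_{u₂}`.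
-/

variable {n : ℕ}

lemma IsThreeGraph.three_le_of_mem {E : Finset (Finset (Fin n))} (hE : IsThreeGraph E)
    {e : Finset (Fin n)} (he : e ∈ E) : 3 ≤ n :=
  hE e he ▸ card_le_univ e |>.trans_eq (Fintype.card_fin n)

section SpectralRadius

lemma pNorm_three_pow_three (y : Fin n → ℝ) : pNorm 3 y ^ 3 = ∑ i, |y i| ^ 3 := by
  have hsum : 0 ≤ ∑ i, |y i| ^ (3 : ℝ) := by positivity
  rw [pNorm, ← Real.rpow_natCast, ← Real.rpow_mul hsum]
  norm_num

lemma pNorm_three_eq_one_iff {y : Fin n → ℝ} : pNorm 3 y = 1 ↔ ∑ i, |y i| ^ 3 = 1 := by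
  rw [← pNorm_three_pow_three, pow_eq_one_iff_of_nonneg (by unfold pNorm; positivity) (by norm_num)]

lemma abs_le_one_of_pNorm_three_eq_one {y : Fin n → ℝ} (hy : pNorm 3 y = 1) (i : Fin n) :
    |y i| ≤ 1 := by
  rw [pNorm_three_eq_one_iff] at hy
  have : |y i| ^ 3 ≤ 1 :=
    hy ▸ single_le_sum (f := fun j => |y j| ^ 3) (fun j _ => by positivity) (mem_univ i)
  exact (pow_le_one_iff_of_nonneg (abs_nonneg _) (by norm_num)).mp this

lemma bddAbove_polyForm_sphere (E : Finset (Finset (Fin n))) :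
    BddAbove {r : ℝ | ∃ y : Fin n → ℝ, pNorm 3 y = 1 ∧ polyForm E y = r} := by
  refine ⟨3 * #E, ?_⟩
  rintro _ ⟨y, hy, rfl⟩
  have hprod (e : Finset (Fin n)) : ∏ i ∈ e, y i ≤ 1 :=
    calc ∏ i ∈ e, y i ≤ ∏ i ∈ e, |y i| := by rw [← abs_prod]; exact le_abs_self _
      _ ≤ 1 := prod_le_one (fun i _ => abs_nonneg _)
          (fun i _ => abs_le_one_of_pNorm_three_eq_one hy i)
  have := sum_le_card_nsmul E _ 1 fun e _ => hprod e
  simp only [nsmul_eq_mul, mul_one] at this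
  rw [polyForm]
  linarith

lemma polyForm_le_specRad (E : Finset (Finset (Fin n))) {y : Fin n → ℝ} (hy : pNorm 3 y = 1) :
    polyForm E y ≤ specRad 3 E :=
  le_csSup (bddAbove_polyForm_sphere E) ⟨y, hy, rfl⟩

lemma polyForm_smul {E : Finset (Finset (Fin n))} (hE : IsThreeGraph E) (c : ℝ)
    (y : Fin n → ℝ) : polyForm E (c • y) = c ^ 3 * polyForm E y := by
  simp only [polyForm, Pi.smul_apply, smul_eq_mul, mul_sum]
  refine sum_congr rfl fun e he => ?_
  rw [prod_mul_distrib, prod_const, hE e he]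
  ring

lemma polyForm_le_specRad_mul {E : Finset (Finset (Fin n))} (hE : IsThreeGraph E)
    (y : Fin n → ℝ) : polyForm E y ≤ specRad 3 E * ∑ i, |y i| ^ 3 := by
  rw [← pNorm_three_pow_three]
  rcases (show 0 ≤ pNorm 3 y by unfold pNorm; positivity).eq_or_lt with hr0 | hrpos
  · have hy : y = 0 := by
      have hsum := pNorm_three_pow_three y
      rw [← hr0, eq_comm, zero_pow three_ne_zero,
        sum_eq_zero_iff_of_nonneg fun j _ => by positivity] at hsum
      ext i
      simpa using hsum i (mem_univ i)
    rw [← hr0, hy]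
    simpa using (polyForm_smul hE 0 0).le
  · set r := pNorm 3 y
    have hunit : pNorm 3 (r⁻¹ • y) = 1 := by
      rw [pNorm_three_eq_one_iff]
      simp only [Pi.smul_apply, smul_eq_mul, abs_mul, mul_pow, ← mul_sum,
        ← pNorm_three_pow_three, abs_inv, abs_of_pos hrpos]
      field_simp
      rfl
    have hy : y = r • r⁻¹ • y := by rw [smul_smul, mul_inv_cancel₀ hrpos.ne', one_smul]
    rw [hy, polyForm_smul hE, mul_comm (specRad 3 E)]
    exact mul_le_mul_of_nonneg_left (polyForm_le_specRad E hunit) (by positivity)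

lemma three_mul_card_le_specRad_mul {E : Finset (Finset (Fin n))} (hE : IsThreeGraph E) :
    3 * (#E : ℝ) ≤ specRad 3 E * n := by
  simpa [polyForm] using polyForm_le_specRad_mul hE 1

end SpectralRadius

section LinkWeight

/-- The paper's `x^{L(v)} = ∑_{S ∈ L(v)} ∏_{i ∈ S} x_i`, one third of `∂P_G/∂x_v`. -/
def linkWeight (E : Finset (Finset (Fin n))) (x : Fin n → ℝ) (v : Fin n) : ℝ :=
  ∑ e ∈ E with v ∈ e, ∏ i ∈ e.erase v, x i

lemma polyForm_congr {E : Finset (Finset (Fin n))} {x y : Fin n → ℝ}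
    (h : ∀ e ∈ E, ∀ i ∈ e, x i = y i) : polyForm E x = polyForm E y := by
  rw [polyForm, polyForm, sum_congr rfl fun e he => prod_congr rfl (h e he)]

lemma linkWeight_congr {E : Finset (Finset (Fin n))} {x y : Fin n → ℝ} (v : Fin n)
    (h : ∀ e ∈ E, ∀ i ∈ e, x i = y i) : linkWeight E x v = linkWeight E y v :=
  sum_congr rfl fun e he => prod_congr rfl fun i hi =>
    h e (mem_filter.mp he).1 i (mem_of_mem_erase hi)

variable (E : Finset (Finset (Fin n))) (x : Fin n → ℝ)

lemma mul_linkWeight (v : Fin n) :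
    x v * linkWeight E x v = ∑ e ∈ E with v ∈ e, ∏ i ∈ e, x i := by
  rw [linkWeight, mul_sum]
  exact sum_congr rfl fun e he => mul_prod_erase e x (mem_filter.mp he).2

lemma update_apply_of_mem_filter_not_mem {v : Fin n} {s : ℝ} {e : Finset (Fin n)}
    (he : e ∈ E.filter (v ∉ ·)) {i : Fin n} (hi : i ∈ e) : Function.update x v s i = x i :=
  Function.update_of_ne (ne_of_mem_of_not_mem hi (mem_filter.mp he).2) _ _

lemma polyForm_update (v : Fin n) (s : ℝ) :
    polyForm E (Function.update x v s)
      = polyForm (E.filter (v ∉ ·)) x + 3 * s * linkWeight E x v := by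
  have hoff : polyForm (E.filter (v ∉ ·)) (Function.update x v s) = polyForm (E.filter (v ∉ ·)) x :=
    polyForm_congr fun e he i hi => update_apply_of_mem_filter_not_mem E x he hi
  have hon : ∑ e ∈ E with v ∈ e, ∏ i ∈ e, Function.update x v s i = s * linkWeight E x v := by
    rw [linkWeight, mul_sum]
    exact sum_congr rfl fun e he => by
      rw [prod_update_of_mem (mem_filter.mp he).2, sdiff_singleton_eq_erase]
  rw [← hoff, polyForm, polyForm, ← sum_filter_not_add_sum_filter E (v ∈ ·), hon]
  ring

lemma polyForm_eq_add_mul_linkWeight (v : Fin n) :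
    polyForm E x = polyForm (E.filter (v ∉ ·)) x + 3 * x v * linkWeight E x v := by
  simpa using polyForm_update E x v (x v)

lemma linkWeight_filter_add_filter_not (p : Finset (Fin n) → Prop) [DecidablePred p] (u : Fin n) :
    linkWeight (E.filter p) x u + linkWeight (E.filter (¬ p ·)) x u = linkWeight E x u := by
  simp only [linkWeight, filter_filter]
  rw [← sum_filter_add_sum_filter_not (E.filter (u ∈ ·)) p, filter_filter, filter_filter]
  congr 2 <;> ext e <;> simp [and_comm]

lemma mul_linkWeight_filter_mem_le (hx : ∀ i, 0 ≤ x i) (u v : Fin n) :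
    x u * linkWeight (E.filter (v ∈ ·)) x u ≤ x v * linkWeight E x v := by
  rw [mul_linkWeight, mul_linkWeight, filter_filter]
  exact sum_le_sum_of_subset_of_nonneg (fun e => by simp +contextual)
    fun e _ _ => prod_nonneg fun i _ => hx i

lemma degree_eq_card_filter (v : Fin n) : degree E v = #(E.filter (v ∈ ·)) := by
  refine card_image_of_injOn fun e he f hf hef => ?_
  rw [← insert_erase (mem_filter.mp he).2, ← insert_erase (mem_filter.mp hf).2]
  exact congrArg (insert v) hef

lemma linkWeight_le_degree_mul {v : Fin n} {M : ℝ}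
    (hM : ∀ e ∈ E, v ∈ e → ∏ i ∈ e.erase v, x i ≤ M) :
    linkWeight E x v ≤ degree E v * M := by
  rw [degree_eq_card_filter, ← nsmul_eq_mul]
  exact sum_le_card_nsmul _ _ _ fun e he => hM e (mem_filter.mp he).1 (mem_filter.mp he).2

end LinkWeight

lemma sum_abs_update_pow_three (y : Fin n → ℝ) (v : Fin n) (s : ℝ) :
    ∑ i, |Function.update y v s i| ^ 3 = ∑ i, |y i| ^ 3 - |y v| ^ 3 + |s| ^ 3 := by
  rw [← add_sum_erase _ _ (mem_univ v), ← add_sum_erase _ (fun i => |y i| ^ 3) (mem_univ v),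
    Function.update_self,
    sum_congr rfl fun i hi => by rw [Function.update_of_ne (ne_of_mem_erase hi)]]
  ring

/-- Moving `x v` to `x v + t` adds `3 t x^{L(v)}` to `P_G(x)` and `(x v + t)³ - x v³` to
`‖x‖₃³`; as `P_G(y) ≤ λ ‖y‖₃³`, the function `λ (x v + t)³ - 3 t x^{L(v)}` is minimal at `t = 0`. -/
lemma linkWeight_eq_of_polyForm_eq_specRad {E : Finset (Finset (Fin n))} (hE : IsThreeGraph E)
    {x : Fin n → ℝ} (hx : pNorm 3 x = 1) (hxE : polyForm E x = specRad 3 E) {v : Fin n}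
    (hv : 0 < x v) : linkWeight E x v = specRad 3 E * x v ^ 2 := by
  set lam := specRad 3 E
  set W := linkWeight E x v
  have hmin : IsLocalMin (fun t => lam * (x v + t) ^ 3 - 3 * t * W) 0 := by
    filter_upwards [Ioi_mem_nhds (neg_lt_zero.mpr hv)] with t ht
    have hle := polyForm_le_specRad_mul hE (Function.update x v (x v + t))
    have hsplit := polyForm_eq_add_mul_linkWeight E x v
    rw [polyForm_update, sum_abs_update_pow_three, pNorm_three_eq_one_iff.mp hx,
      abs_of_pos hv, abs_of_pos (neg_lt_iff_pos_add'.mp ht)] at hle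
    simp only [add_zero, mul_zero, zero_mul, sub_zero]
    linarith
  have hderiv : HasDerivAt (fun t => lam * (x v + t) ^ 3 - 3 * t * W)
      (lam * (3 * x v ^ 2) - 3 * W) 0 :=
    ((((hasDerivAt_id' 0).const_add (x v)).fun_pow 3).const_mul lam).fun_sub
      (((hasDerivAt_id' 0).const_mul 3).mul_const W) |>.congr_deriv (by norm_num)
  linarith [hmin.hasDerivAt_eq_zero hderiv]

section Transfer

lemma Finset.symmDiff_image_subset {α β : Type*} [DecidableEq α] [DecidableEq β] (f : α → β)
    (s t : Finset α) : symmDiff (s.image f) (t.image f) ⊆ (symmDiff s t).image f := by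
  intro b
  simp only [mem_symmDiff, mem_image]
  grind

lemma Finset.eq_of_symmDiff_subset_left {α : Type*} [DecidableEq α] {s t : Finset α}
    (h : symmDiff s t ⊆ s)
    (hcard : #s ≤ #t) : s = t := by
  refine (eq_of_subset_of_card_le (fun a ha => ?_) hcard).symm
  by_contra has
  exact has (h (mem_symmDiff.mpr (Or.inr ⟨ha, has⟩)))

variable {E : Finset (Finset (Fin n))}

lemma Cancellative.not_symmDiff_subset (hE : IsThreeGraph E) (hc : Cancellative E)
    {A B C : Finset (Fin n)} (hA : A ∈ E) (hB : B ∈ E) (hC : C ∈ E) (hBC : B ≠ C) :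
    ¬ symmDiff B C ⊆ A := by
  intro h
  refine hc A hA B hB C hC ?_ ?_ hBC h
  · rintro rfl
    exact hBC (eq_of_symmDiff_subset_left h (by rw [hE A hA, hE C hC]))
  · rintro rfl
    rw [symmDiff_comm] at h
    exact hBC (eq_of_symmDiff_subset_left h (by rw [hE A hA, hE B hB])).symm

variable {u v : Fin n}

lemma mem_transfer {f : Finset (Fin n)} :
    f ∈ transfer E u v ↔
      f ∈ E ∧ v ∉ f ∨ ∃ e ∈ E, u ∈ e ∧ v ∉ e ∧ insert v (e.erase u) = f := by
  simp [transfer, and_assoc]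

lemma IsThreeGraph.transfer (hE : IsThreeGraph E) : IsThreeGraph (transfer E u v) := by
  intro f hf
  obtain ⟨hfE, -⟩ | ⟨e, he, hue, hve, rfl⟩ := mem_transfer.mp hf
  · exact hE f hfE
  · rw [card_insert_of_notMem (fun h => hve (mem_of_mem_erase h)), card_erase_of_mem hue, hE e he]

lemma not_mem_of_mem_transfer (huv : u ≠ v) {f : Finset (Fin n)} (hf : f ∈ transfer E u v)
    (hu : u ∈ f) : v ∉ f := by
  obtain ⟨-, hvf⟩ | ⟨e, -, -, -, rfl⟩ := mem_transfer.mp hf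
  · exact hvf
  · simp [huv] at hu

lemma image_update_id_mem_of_mem_transfer {f : Finset (Fin n)} (hf : f ∈ transfer E u v) :
    f.image (Function.update id v u) ∈ E := by
  obtain ⟨hfE, hvf⟩ | ⟨e, he, hue, hve, rfl⟩ := mem_transfer.mp hf
  · rwa [image_congr (g := id) fun w hw => Function.update_of_ne (by rintro rfl; exact hvf hw) _ _,
      image_id]
  · rwa [image_insert, Function.update_self,
      image_congr (g := id) fun w hw => Function.update_of_ne
        (by rintro rfl; exact hve (mem_of_mem_erase hw)) _ _, image_id, insert_erase hue]

lemma mem_image_update_id_of_ne {f : Finset (Fin n)} {w : Fin n} (hwu : w ≠ u) (hwv : w ≠ v) :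
    w ∈ f.image (Function.update id v u) ↔ w ∈ f := by
  simp only [mem_image, Function.update_apply, id]
  grind

lemma mem_image_update_id_self {f : Finset (Fin n)} :
    u ∈ f.image (Function.update id v u) ↔ u ∈ f ∨ v ∈ f := by
  simp only [mem_image, Function.update_apply, id]
  grind

lemma mem_symmDiff_of_image_update_id_eq (huv : u ≠ v) {f g : Finset (Fin n)}
    (hf : f ∈ transfer E u v) (hg : g ∈ transfer E u v) (hfg : f ≠ g)
    (himg : f.image (Function.update id v u) = g.image (Function.update id v u)) :
    u ∈ symmDiff f g ∧ v ∈ symmDiff f g := by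
  have hu : u ∈ f ∨ v ∈ f ↔ u ∈ g ∨ v ∈ g := by
    simpa only [mem_image_update_id_self, eq_iff_iff] using congrArg (u ∈ ·) himg
  have hfu := not_mem_of_mem_transfer huv hf
  have hgu := not_mem_of_mem_transfer huv hg
  obtain ⟨w, hw⟩ := symmDiff_nonempty.mpr hfg
  simp only [mem_symmDiff] at hw ⊢
  have hwuv : w = u ∨ w = v := by
    by_contra! h
    have hwfg := congrArg (w ∈ ·) himg
    simp only [mem_image_update_id_of_ne h.1 h.2, eq_iff_iff] at hwfg
    tauto
  rcases hwuv with rfl | rfl <;> tauto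

/-- Merging `v` into `u` maps the edges of the transfer to edges of `E`. It identifies two edges
only if their symmetric difference is `{u, v}`, and no edge of the transfer contains both. -/
lemma Cancellative.transfer (hE : IsThreeGraph E) (hc : Cancellative E) (huv : u ≠ v) :
    Cancellative (transfer E u v) := by
  intro A hA B hB C hC _ _ hBC hsub
  by_cases himg : B.image (Function.update id v u) = C.image (Function.update id v u)
  · obtain ⟨hu, hv⟩ := mem_symmDiff_of_image_update_id_eq huv hB hC hBC himg
    exact not_mem_of_mem_transfer huv hA (hsub hu) (hsub hv)
  · exact hc.not_symmDiff_subset hE (image_update_id_mem_of_mem_transfer hA)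
      (image_update_id_mem_of_mem_transfer hB) (image_update_id_mem_of_mem_transfer hC) himg
      ((symmDiff_image_subset _ B C).trans (image_subset_image hsub))

lemma polyForm_transfer (y : Fin n → ℝ) :
    polyForm (transfer E u v) y
      = polyForm (E.filter (v ∉ ·)) y + 3 * y v * linkWeight (E.filter (v ∉ ·)) y u := by
  have hdisj : Disjoint (E.filter (v ∉ ·))
      ((E.filter fun e => u ∈ e ∧ v ∉ e).image fun e => insert v (e.erase u)) := by
    simp only [disjoint_left, mem_filter, mem_image]
    rintro _ ⟨-, hv⟩ ⟨e, -, rfl⟩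
    exact hv (mem_insert_self v _)
  have hinj : Set.InjOn (fun e : Finset (Fin n) => insert v (e.erase u))
      (E.filter fun e => u ∈ e ∧ v ∉ e) := by
    intro e he f hf hef
    rw [mem_coe, mem_filter] at he hf
    have := congrArg (fun s => insert u (s.erase v)) hef
    simpa [erase_insert (fun h => he.2.2 (mem_of_mem_erase h)),
      erase_insert (fun h => hf.2.2 (mem_of_mem_erase h)), insert_erase he.2.1,
      insert_erase hf.2.1] using this
  rw [polyForm, transfer, sum_union hdisj, sum_image hinj, linkWeight, filter_filter, mul_add,
    polyForm, mul_assoc]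
  congr 2
  rw [mul_sum]
  refine sum_congr (filter_congr fun e _ => and_comm) fun e he => ?_
  exact prod_insert fun h => (mem_filter.mp he).2.1 (mem_of_mem_erase h)

end Transfer


section CompletePartite

variable {P : Fin n → Fin 3}

lemma eq_of_mem_of_partite {e : Finset (Fin n)} (he : ∀ k, #(e.filter (P · = k)) = 1)
    {a b : Fin n} (ha : a ∈ e) (hb : b ∈ e) (hab : P a = P b) : a = b :=
  card_le_one.mp (he (P a)).le a (by simp [ha]) b (by simp [hb, hab])

lemma card_eq_three_of_partite {e : Finset (Fin n)} (he : ∀ k, #(e.filter (P · = k)) = 1) :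
    #e = 3 := by
  rw [card_eq_sum_card_fiberwise (f := P) (t := univ) fun _ _ => mem_univ _, Fin.sum_univ_three,
    he, he, he]

lemma cancellative_of_partite {E : Finset (Finset (Fin n))}
    (hE : ∀ e ∈ E, ∀ k, #(e.filter (P · = k)) = 1) : Cancellative E := by
  intro A hA B hB C hC _ _ hBC hsub
  obtain ⟨b, hbB, hbC⟩ : ∃ b ∈ B, b ∉ C := by
    by_contra! h
    exact hBC (eq_of_subset_of_card_le h
      (by rw [card_eq_three_of_partite (hE B hB), card_eq_three_of_partite (hE C hC)]))
  obtain ⟨c, hc⟩ := card_eq_one.mp (hE C hC (P b))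
  obtain ⟨hcC, hPc⟩ := mem_filter.mp (hc ▸ mem_singleton_self c)
  have hcB : c ∉ B := fun h => hbC (eq_of_mem_of_partite (hE B hB) h hbB hPc ▸ hcC)
  have hbc : b = c := eq_of_mem_of_partite (hE A hA)
    (hsub (mem_symmDiff.mpr (Or.inl ⟨hbB, hbC⟩)))
    (hsub (mem_symmDiff.mpr (Or.inr ⟨hcC, hcB⟩))) hPc.symm
  exact hbC (hbc ▸ hcC)

lemma partite_triple {a b c : Fin n} (ha : P a = 0) (hb : P b = 1) (hc : P c = 2) (k : Fin 3) :
    #(({a, b, c} : Finset (Fin n)).filter (P · = k)) = 1 := by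
  fin_cases k <;> simp [filter_insert, filter_singleton, ha, hb, hc]

lemma card_mul_card_mul_card_le_card_partite :
    #{i | P i = 0} * #{i | P i = 1} * #{i | P i = 2}
      ≤ #{e : Finset (Fin n) | ∀ k, #(e.filter (P · = k)) = 1} := by
  rw [← card_product, ← card_product]
  refine card_le_card_of_injOn (fun t => {t.1.1, t.1.2, t.2}) (fun t ht => ?_) ?_
  · simp only [coe_product, coe_filter, mem_univ, true_and, Set.mem_prod, Set.mem_ofPred_eq] at ht
    simp only [coe_filter, mem_univ, true_and, Set.mem_ofPred_eq]
    exact partite_triple ht.1.1 ht.1.2 ht.2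
  · rintro ⟨⟨a, b⟩, c⟩ ht ⟨⟨a', b'⟩, c'⟩ ht' h
    simp only [coe_product, coe_filter, mem_univ, true_and, Set.mem_prod, Set.mem_ofPred_eq]
      at ht ht' h
    have he := partite_triple ht.1.1 ht.1.2 ht.2
    have hmem : a' ∈ ({a, b, c} : Finset (Fin n)) ∧ b' ∈ ({a, b, c} : Finset (Fin n)) ∧
        c' ∈ ({a, b, c} : Finset (Fin n)) := by
      simp [h]
    simp only [Prod.mk.injEq]
    exact ⟨⟨eq_of_mem_of_partite he (by simp) hmem.1 (ht.1.1.trans ht'.1.1.symm),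
      eq_of_mem_of_partite he (by simp) hmem.2.1 (ht.1.2.trans ht'.1.2.symm)⟩,
      eq_of_mem_of_partite he (by simp) hmem.2.2 (ht.2.trans ht'.2.symm)⟩

end CompletePartite

section T3

lemma Fin.card_filter_le_val_lt {a b : ℕ} (hb : b ≤ n) :
    #{i : Fin n | a ≤ (i : ℕ) ∧ (i : ℕ) < b} = b - a := by
  rw [← card_map Fin.valEmbedding, ← Nat.card_Ico]
  congr 1
  ext k
  simp only [mem_map, mem_filter, mem_univ, true_and, Fin.valEmbedding_apply, mem_Ico]
  exact ⟨by rintro ⟨i, hi, rfl⟩; exact hi, fun hk => ⟨⟨k, by omega⟩, hk, rfl⟩⟩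

lemma card_filter_part3 (k : Fin 3) : #{i | part3 n i = k} = (n + k) / 3 := by
  fin_cases k
  · rw [filter_congr (q := fun i : Fin n => 0 ≤ (i : ℕ) ∧ (i : ℕ) < n / 3)
      fun i _ => by unfold part3; split_ifs <;> grind]
    simpa using Fin.card_filter_le_val_lt (n := n) (a := 0) (b := n / 3) (by omega)
  · rw [filter_congr (q := fun i : Fin n => n / 3 ≤ (i : ℕ) ∧ (i : ℕ) < n / 3 + (n + 1) / 3)
      fun i _ => by unfold part3; split_ifs <;> grind]
    rw [Fin.card_filter_le_val_lt (by omega)]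
    simp
  · rw [filter_congr (q := fun i : Fin n => n / 3 + (n + 1) / 3 ≤ (i : ℕ) ∧ (i : ℕ) < n)
      fun i _ => by unfold part3; split_ifs <;> grind]
    rw [Fin.card_filter_le_val_lt le_rfl]
    simp
    omega

lemma mem_T3 {e : Finset (Fin n)} :
    e ∈ T3 n ↔ ∀ k : Fin 3, #(e.filter (part3 n · = k)) = 1 := by
  simp [T3]

lemma T3_isThreeGraph : IsThreeGraph (T3 n) :=
  fun _ he => card_eq_three_of_partite (mem_T3.mp he)

lemma T3_cancellative : Cancellative (T3 n) :=
  cancellative_of_partite fun _ he => mem_T3.mp he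

lemma t3_le_card_T3 : t3 n ≤ #(T3 n) := by
  rw [T3]
  simpa [t3, card_filter_part3] using card_mul_card_mul_card_le_card_partite (P := part3 n)

lemma sq_mul_sub_one_lt_t3 (hn : 3 ≤ n) : (n : ℝ) ^ 2 * (n - 1) < 27 * t3 n := by
  obtain ⟨m, hm1, hm | hm | hm⟩ : ∃ m, 1 ≤ m ∧ (n = 3 * m ∨ n = 3 * m + 1 ∨ n = 3 * m + 2) :=
    ⟨n / 3, by omega, by omega⟩
  · have ht : t3 n = m * m * m := by rw [t3]; congr 2 <;> omega
    rw [ht, hm]; push_cast; nlinarith [(by exact_mod_cast hm1 : (1 : ℝ) ≤ m)]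
  · have ht : t3 n = m * m * (m + 1) := by rw [t3]; congr 2 <;> omega
    rw [ht, hm]; push_cast; nlinarith [(by exact_mod_cast hm1 : (1 : ℝ) ≤ m)]
  · have ht : t3 n = m * (m + 1) * (m + 1) := by rw [t3]; congr 2 <;> omega
    rw [ht, hm]; push_cast; nlinarith [(by exact_mod_cast hm1 : (1 : ℝ) ≤ m)]

end T3

section Extremal

variable {E : Finset (Finset (Fin n))} {x : Fin n → ℝ}

lemma lt_specRad_of_maxSpectral (hmax : MaxSpectral 3 E) (hn : 3 ≤ n) :
    (n : ℝ) * (n - 1) / 9 < specRad 3 E := by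
  have hT3 := three_mul_card_le_specRad_mul (T3_isThreeGraph (n := n))
  have hcard : (t3 n : ℝ) ≤ #(T3 n) := by exact_mod_cast t3_le_card_T3
  have hmaxT3 := hmax.2.2 _ T3_isThreeGraph T3_cancellative
  have hnpos : (0 : ℝ) < n := by positivity
  refine lt_of_mul_lt_mul_right ?_ hnpos.le
  nlinarith [sq_mul_sub_one_lt_t3 hn]

lemma pos_of_forall_le (hx0 : ∀ i, 0 ≤ x i) (hxn : pNorm 3 x = 1) {u : Fin n}
    (hu : ∀ i, x i ≤ x u) : 0 < x u := by
  by_contra! hle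
  have hzero : ∑ i, |x i| ^ 3 = 0 :=
    sum_eq_zero fun i _ => by rw [le_antisymm ((hu i).trans hle) (hx0 i)]; simp
  rw [pNorm_three_eq_one_iff.mp hxn] at hzero
  exact one_ne_zero hzero

/-- The transfer `T_v^u(G)` is cancellative, so `P_T(y) ≤ λ(G) ‖y‖₃³` for `y` equal to `x` with
`x v` replaced by `s`. -/
lemma linkWeight_filter_not_mem_le (hmax : MaxSpectral 3 E) (hx0 : ∀ i, 0 ≤ x i)
    (hxn : pNorm 3 x = 1) (hxE : polyForm E x = specRad 3 E) {u v : Fin n} (huv : u ≠ v)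
    {s : ℝ} (hs : 0 ≤ s) :
    3 * s * linkWeight (E.filter (v ∉ ·)) x u
      ≤ 3 * x v * linkWeight E x v + specRad 3 E * (s ^ 3 - x v ^ 3) := by
  obtain ⟨hE, hc, hmaxE⟩ := hmax
  have hy : ∀ e ∈ E.filter (v ∉ ·), ∀ i ∈ e, Function.update x v s i = x i :=
    fun _ he _ hi => update_apply_of_mem_filter_not_mem E x he hi
  have hnorm : 0 ≤ ∑ i, |Function.update x v s i| ^ 3 := by positivity
  have hle := (polyForm_le_specRad_mul (hE.transfer (u := u) (v := v)) _).trans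
    (mul_le_mul_of_nonneg_right (hmaxE _ hE.transfer (hc.transfer hE huv)) hnorm)
  rw [polyForm_transfer, polyForm_congr hy, linkWeight_congr u hy, Function.update_self,
    sum_abs_update_pow_three, pNorm_three_eq_one_iff.mp hxn, abs_of_nonneg (hx0 v),
    abs_of_nonneg hs] at hle
  linarith [polyForm_eq_add_mul_linkWeight E x v]

lemma pos_of_maxSpectral (hmax : MaxSpectral 3 E) (hx0 : ∀ i, 0 ≤ x i) (hxn : pNorm 3 x = 1)
    (hxE : polyForm E x = specRad 3 E) (hspec : 0 < specRad 3 E) {u : Fin n}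
    (hu : ∀ i, x i ≤ x u) (v : Fin n) : 0 < x v := by
  have hupos := pos_of_forall_le hx0 hxn hu
  refine (hx0 v).lt_of_ne fun hv0 => ?_
  have huv : u ≠ v := by rintro rfl; exact hupos.ne hv0
  have htr := linkWeight_filter_not_mem_le hmax hx0 hxn hxE huv hupos.le
  have hsplit := linkWeight_filter_add_filter_not E x (v ∈ ·) u
  have hmem := mul_linkWeight_filter_mem_le E x hx0 u v
  rw [linkWeight_eq_of_polyForm_eq_specRad hmax.1 hxn hxE hupos] at hsplit
  rw [← hv0] at htr hmem
  nlinarith [pow_pos hupos 3]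

lemma pow_three_le_of_maxSpectral (hmax : MaxSpectral 3 E) (hx0 : ∀ i, 0 ≤ x i)
    (hxn : pNorm 3 x = 1) (hxE : polyForm E x = specRad 3 E) (hspec : 0 < specRad 3 E)
    {u : Fin n} (hu : ∀ i, x i ≤ x u) {v : Fin n} (huv : u ≠ v) :
    x u ^ 3 ≤ x u * x v ^ 2 + x v ^ 3 := by
  have hupos := pos_of_forall_le hx0 hxn hu
  have hvpos := pos_of_maxSpectral hmax hx0 hxn hxE hspec hu v
  have htr := linkWeight_filter_not_mem_le hmax hx0 hxn hxE huv hvpos.le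
  have hsplit := linkWeight_filter_add_filter_not E x (v ∈ ·) u
  have hmem := mul_linkWeight_filter_mem_le E x hx0 u v
  rw [linkWeight_eq_of_polyForm_eq_specRad hmax.1 hxn hxE hupos] at hsplit
  rw [linkWeight_eq_of_polyForm_eq_specRad hmax.1 hxn hxE hvpos] at htr hmem
  have hL : linkWeight (E.filter (v ∉ ·)) x u ≤ specRad 3 E * x v ^ 2 := by
    nlinarith
  refine le_of_mul_le_mul_left ?_ hspec
  nlinarith

lemma three_quarters_lt_of_pow_three_le {a b : ℝ} (ha : 0 < a) (hb : 0 ≤ b)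
    (h : a ^ 3 ≤ a * b ^ 2 + b ^ 3) : 3 / 4 * a < b := by
  by_contra! hba
  have h2 := mul_le_mul_of_nonneg_left (pow_le_pow_left₀ hb hba 2) ha.le
  have h3 := pow_le_pow_left₀ hb hba 3
  nlinarith [pow_pos ha 3]

lemma three_quarters_lt_of_maxSpectral (hmax : MaxSpectral 3 E) (hx0 : ∀ i, 0 ≤ x i)
    (hxn : pNorm 3 x = 1) (hxE : polyForm E x = specRad 3 E) (hspec : 0 < specRad 3 E)
    {u : Fin n} (hu : ∀ i, x i ≤ x u) (v : Fin n) : 3 / 4 * x u < x v := by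
  have hupos := pos_of_forall_le hx0 hxn hu
  rcases eq_or_ne u v with rfl | huv
  · linarith
  · exact three_quarters_lt_of_pow_three_le hupos (hx0 v)
      (pow_three_le_of_maxSpectral hmax hx0 hxn hxE hspec hu huv)

end Extremal

section Degrees

variable {E : Finset (Finset (Fin n))} {x : Fin n → ℝ}

lemma prod_erase_le_sq (hE : IsThreeGraph E) (hx0 : ∀ i, 0 ≤ x i) {u : Fin n}
    (hu : ∀ i, x i ≤ x u) {v : Fin n} {e : Finset (Fin n)} (he : e ∈ E) (hv : v ∈ e) :
    ∏ i ∈ e.erase v, x i ≤ x u ^ 2 := by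
  calc ∏ i ∈ e.erase v, x i ≤ ∏ _i ∈ e.erase v, x u :=
        prod_le_prod (fun i _ => hx0 i) fun i _ => hu i
    _ = x u ^ 2 := by rw [prod_const, card_erase_of_mem hv, hE e he]

lemma adjacent_of_not_adjacent (hlink : ∀ u v : Fin n, ¬ Adjacent E u v → link E u = link E v)
    {e : Finset (Fin n)} (he : e ∈ E) {j k : Fin n} (hj : j ∈ e) (hk : k ∈ e) (hjk : j ≠ k)
    {u : Fin n} (hnj : ¬ Adjacent E u j) : Adjacent E u k := by
  have hlj : e.erase j ∈ link E u := hlink u j hnj ▸ mem_image_of_mem _ (mem_filter.mpr ⟨he, hj⟩)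
  obtain ⟨f, hf, hfe⟩ := mem_image.mp hlj
  have hkf : k ∈ f.erase u := hfe ▸ mem_erase.mpr ⟨hjk.symm, hk⟩
  exact ⟨(ne_of_mem_erase hkf).symm, f, (mem_filter.mp hf).1, (mem_filter.mp hf).2,
    mem_of_mem_erase hkf⟩

lemma prod_erase_le_mul (hE : IsThreeGraph E)
    (hlink : ∀ u v : Fin n, ¬ Adjacent E u v → link E u = link E v) (hx0 : ∀ i, 0 ≤ x i)
    {u₁ u₂ : Fin n} (hu₁ : ∀ i, x i ≤ x u₁) (hu₂ : ∀ w, Adjacent E u₁ w → x w ≤ x u₂)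
    {e : Finset (Fin n)} (he : e ∈ E) (hu₂e : u₂ ∈ e) :
    ∏ i ∈ e.erase u₂, x i ≤ x u₁ * x u₂ := by
  obtain ⟨j, k, hjk, hpair⟩ := card_eq_two.mp (by rw [card_erase_of_mem hu₂e, hE e he])
  have hj : j ∈ e := mem_of_mem_erase (hpair ▸ mem_insert_self j {k})
  have hk : k ∈ e := mem_of_mem_erase (hpair ▸ mem_insert_of_mem (mem_singleton_self k))
  rw [hpair, prod_pair hjk]
  by_cases hadj : Adjacent E u₁ j
  · rw [mul_comm (x u₁)]
    exact mul_le_mul (hu₂ j hadj) (hu₁ k) (hx0 k) (hx0 u₂)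
  · exact mul_le_mul (hu₁ j)
      (hu₂ k (adjacent_of_not_adjacent hlink he hj hk hjk hadj)) (hx0 k) (hx0 u₁)

lemma mul_sq_le_degree_mul_sq (hE : IsThreeGraph E) (hx0 : ∀ i, 0 ≤ x i)
    (hxn : pNorm 3 x = 1) (hxE : polyForm E x = specRad 3 E) {u : Fin n}
    (hu : ∀ i, x i ≤ x u) {v : Fin n} (hv : 0 < x v) :
    specRad 3 E * x v ^ 2 ≤ degree E v * x u ^ 2 :=
  linkWeight_eq_of_polyForm_eq_specRad hE hxn hxE hv ▸
    linkWeight_le_degree_mul E x fun _ he hv => prod_erase_le_sq hE hx0 hu he hv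

lemma mul_sq_le_degree_mul_mul (hE : IsThreeGraph E)
    (hlink : ∀ u v : Fin n, ¬ Adjacent E u v → link E u = link E v) (hx0 : ∀ i, 0 ≤ x i)
    (hxn : pNorm 3 x = 1) (hxE : polyForm E x = specRad 3 E) {u₁ u₂ : Fin n}
    (hu₁ : ∀ i, x i ≤ x u₁) (hu₂ : ∀ w, Adjacent E u₁ w → x w ≤ x u₂) (hu₂pos : 0 < x u₂) :
    specRad 3 E * x u₂ ^ 2 ≤ degree E u₂ * (x u₁ * x u₂) :=
  linkWeight_eq_of_polyForm_eq_specRad hE hxn hxE hu₂pos ▸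
    linkWeight_le_degree_mul E x fun _ he hv => prod_erase_le_mul hE hlink hx0 hu₁ hu₂ he hv

end Degrees

/-- Degree bounds for a 3-spectral-extremal cancellative 3-graph `G*` in which
non-adjacent vertices have equal links. Here `x` is a nonnegative unit eigenvector to
`λ^(3)(G*)`, `u₁` has maximum `x`-value, and `u₂` has maximum `x`-value among the
neighbors of `u₁`. -/
theorem degree_bounds {n : ℕ} (E : Finset (Finset (Fin n))) (hmax : MaxSpectral 3 E)
    (hlink : ∀ u v : Fin n, ¬ Adjacent E u v → link E u = link E v)
    (x : Fin n → ℝ) (hx0 : ∀ i, 0 ≤ x i) (hxn : pNorm 3 x = 1)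
    (hxe : polyForm E x = specRad 3 E)
    (u₁ u₂ : Fin n) (hu₁ : ∀ i, x i ≤ x u₁)
    (hu₂adj : Adjacent E u₁ u₂) (hu₂max : ∀ w : Fin n, Adjacent E u₁ w → x w ≤ x u₂) :
    (n : ℝ) * ((n : ℝ) - 1) / 9 < (degree E u₁ : ℝ) ∧
    (n : ℝ) * ((n : ℝ) - 1) / 12 < (degree E u₂ : ℝ) ∧
    ∀ v : Fin n, (n : ℝ) * ((n : ℝ) - 1) / 16 < (degree E v : ℝ) := by
  have hE := hmax.1
  obtain ⟨-, e, he, -, -⟩ := hu₂adj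
  have hn : (3 : ℝ) ≤ n := by exact_mod_cast hE.three_le_of_mem he
  have hspec := lt_specRad_of_maxSpectral hmax (hE.three_le_of_mem he)
  have hspec_pos : 0 < specRad 3 E :=
    hspec.trans_le' (div_nonneg (mul_nonneg n.cast_nonneg (by linarith)) (by norm_num))
  have hquarter := three_quarters_lt_of_maxSpectral hmax hx0 hxn hxe hspec_pos hu₁
  have hu₁pos := pos_of_forall_le hx0 hxn hu₁
  have hpos (v : Fin n) : 0 < x v := by linarith [hquarter v]
  refine ⟨?_, ?_, fun v => ?_⟩
  · have h := mul_sq_le_degree_mul_sq hE hx0 hxn hxe hu₁ hu₁pos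
    linarith [le_of_mul_le_mul_right h (by positivity)]
  · have h := mul_sq_le_degree_mul_mul hE hlink hx0 hxn hxe hu₁ hu₂max (hpos u₂)
    rw [sq, ← mul_assoc, ← mul_assoc] at h
    have hlt : 3 / 4 * specRad 3 E * x u₁ < degree E u₂ * x u₁ := by
      nlinarith [le_of_mul_le_mul_right h (hpos u₂), hquarter u₂]
    linarith [lt_of_mul_lt_mul_right hlt hu₁pos.le]
  · have h := mul_sq_le_degree_mul_sq hE hx0 hxn hxe hu₁ (hpos v)
    have hsq := pow_lt_pow_left₀ (hquarter v) (by positivity) two_ne_zero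
    have hlt : 9 / 16 * specRad 3 E * x u₁ ^ 2 < degree E v * x u₁ ^ 2 := by nlinarith
    linarith [lt_of_mul_lt_mul_right hlt (by positivity)]
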